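/- arXiv:1411.6036 — 2 statements merged into one kernel-verified Lean document; each statement's English description precedes it below -/
import Mathlib

section
/- Let x, y ∈ ℝ^d, 0 < θ₁, θ₂ ≤ 1 and 0 < α ≤ 1. Suppose u is twice continuously differentiable on an open set containing the segment [x − θ₂ y, x + θ₁ y], and H ≥ 0 is such that |⟨(D²u(p) − D²u(q)) y, y⟩| ≤ H |p − q|^α |y|² for all p, q on that segment. Define the nonuniform second difference δ_{θ₁,θ₂} u(x, y) := 2 (θ₁ u(x − θ₂ y) + θ₂ u(x + θ₁ y) − (θ₁ + θ₂) u(x)) / (θ₁ θ₂ (θ₁ + θ₂)). Then |δ_{θ₁,θ₂} u(x, y) − ⟨D²u(x) y, y⟩| ≤ H |y|^{2+α}. -/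
open Set Metric MeasureTheory Filter
open scoped RealInnerProductSpace

noncomputable section

/-- The nonuniform centered second difference
`δ_{θ₁,θ₂} u(x, y) := 2 (θ₁ u(x − θ₂ y) + θ₂ u(x + θ₁ y) − (θ₁ + θ₂) u(x)) / (θ₁ θ₂ (θ₁ + θ₂))`. -/
def secondDiff {d : ℕ} (u : EuclideanSpace ℝ (Fin d) → ℝ)
    (x y : EuclideanSpace ℝ (Fin d)) (θ₁ θ₂ : ℝ) : ℝ :=
  2 * (θ₁ * u (x - θ₂ • y) + θ₂ * u (x + θ₁ • y) - (θ₁ + θ₂) * u x) /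
    (θ₁ * θ₂ * (θ₁ + θ₂))

set_option maxHeartbeats 1000000

/-- **Second order accuracy of the nonuniform second difference.**
If `u` is `C²` on an open set containing the segment `[x − θ₂ y, x + θ₁ y]` and its second
derivative in the direction `y` is `α`-Hölder with constant `H |y|²` on that segment, then
`|δ_{θ₁,θ₂} u(x, y) − ⟨D²u(x) y, y⟩| ≤ H |y|^{2+α}`. -/
theorem stmt_5 (d : ℕ) (hd : 1 ≤ d)
    (x y : EuclideanSpace ℝ (Fin d)) (θ₁ θ₂ : ℝ)
    (hθ₁0 : 0 < θ₁) (hθ₁1 : θ₁ ≤ 1) (hθ₂0 : 0 < θ₂) (hθ₂1 : θ₂ ≤ 1)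
    (α : ℝ) (hα0 : 0 < α) (hα1 : α ≤ 1)
    (u : EuclideanSpace ℝ (Fin d) → ℝ)
    (U : Set (EuclideanSpace ℝ (Fin d))) (hU : IsOpen U)
    (hseg : segment ℝ (x - θ₂ • y) (x + θ₁ • y) ⊆ U)
    (hu : ContDiffOn ℝ 2 u U)
    (H : ℝ) (hH : 0 ≤ H)
    (hHolder : ∀ p ∈ segment ℝ (x - θ₂ • y) (x + θ₁ • y),
      ∀ q ∈ segment ℝ (x - θ₂ • y) (x + θ₁ • y),
        |iteratedFDeriv ℝ 2 u p ![y, y] - iteratedFDeriv ℝ 2 u q ![y, y]|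
          ≤ H * ‖p - q‖ ^ α * ‖y‖ ^ 2) :
    |secondDiff u x y θ₁ θ₂ - iteratedFDeriv ℝ 2 u x ![y, y]|
      ≤ H * ‖y‖ ^ ((2 : ℝ) + α) := by
  have hθ12 : (0:ℝ) < θ₁ + θ₂ := by positivity
  -- membership of the parametrized points in the segment
  have hmem : ∀ t ∈ Icc (-θ₂) θ₁, x + t • y ∈ segment ℝ (x - θ₂ • y) (x + θ₁ • y) := by
    intro t ht
    refine ⟨(θ₁ - t) / (θ₁ + θ₂), (t + θ₂) / (θ₁ + θ₂), ?_, ?_, ?_, ?_⟩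
    · exact div_nonneg (by linarith [ht.2]) hθ12.le
    · exact div_nonneg (by linarith [ht.1]) hθ12.le
    · field_simp
      ring
    · match_scalars <;> field_simp <;> ring
  have hmemU : ∀ t ∈ Icc (-θ₂) θ₁, x + t • y ∈ U := fun t ht => hseg (hmem t ht)
  set g : ℝ → ℝ := fun t => u (x + t • y) with hgdef
  set g1 : ℝ → ℝ := fun t => fderiv ℝ u (x + t • y) y with hg1def
  set g2 : ℝ → ℝ := fun t => fderiv ℝ (fderiv ℝ u) (x + t • y) y y with hg2def
  have hud : DifferentiableOn ℝ u U := hu.differentiableOn (by norm_num)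
  have hfd : ContDiffOn ℝ 1 (fderiv ℝ u) U := hu.fderiv_of_isOpen hU (by norm_num)
  have hfd' : DifferentiableOn ℝ (fderiv ℝ u) U := hfd.differentiableOn one_ne_zero
  have hφ : ∀ t : ℝ, HasDerivAt (fun s : ℝ => x + s • y) y t := by
    intro t
    simpa using ((hasDerivAt_id t).smul_const y).const_add x
  have hg : ∀ t ∈ Icc (-θ₂) θ₁, HasDerivAt g (g1 t) t := by
    intro t ht
    have hxU : x + t • y ∈ U := hmemU t ht
    have h1 : HasFDerivAt u (fderiv ℝ u (x + t • y)) (x + t • y) :=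
      (hud.differentiableAt (hU.mem_nhds hxU)).hasFDerivAt
    exact h1.comp_hasDerivAt t (hφ t)
  have hg1 : ∀ t ∈ Icc (-θ₂) θ₁, HasDerivAt g1 (g2 t) t := by
    intro t ht
    have hxU : x + t • y ∈ U := hmemU t ht
    have h2 : HasFDerivAt (fderiv ℝ u) (fderiv ℝ (fderiv ℝ u) (x + t • y)) (x + t • y) :=
      (hfd'.differentiableAt (hU.mem_nhds hxU)).hasFDerivAt
    have h3 : HasFDerivAt (fun z => fderiv ℝ u z y)
        ((ContinuousLinearMap.apply ℝ ℝ y).comp (fderiv ℝ (fderiv ℝ u) (x + t • y)))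
        (x + t • y) := (ContinuousLinearMap.apply ℝ ℝ y).hasFDerivAt.comp _ h2
    have h4 := h3.comp_hasDerivAt t (hφ t)
    exact h4
  set w : ℝ → ℝ := fun t => θ₂ * g (θ₁ * t) + θ₁ * g (-(θ₂ * t)) with hwdef
  have hmem1 : ∀ t ∈ Icc (0:ℝ) 1, θ₁ * t ∈ Icc (-θ₂) θ₁ :=
    fun t ht => ⟨by nlinarith [ht.1, ht.2], by nlinarith [ht.1, ht.2]⟩
  have hmem2 : ∀ t ∈ Icc (0:ℝ) 1, -(θ₂ * t) ∈ Icc (-θ₂) θ₁ :=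
    fun t ht => ⟨by nlinarith [ht.1, ht.2], by nlinarith [ht.1, ht.2]⟩
  have hw : ∀ t ∈ Icc (0:ℝ) 1,
      HasDerivAt w (θ₁ * θ₂ * (g1 (θ₁ * t) - g1 (-(θ₂ * t)))) t := by
    intro t ht
    have hinner1 : HasDerivAt (fun s : ℝ => θ₁ * s) θ₁ t := by
      simpa using (hasDerivAt_id t).const_mul θ₁
    have hinner2 : HasDerivAt (fun s : ℝ => -(θ₂ * s)) (-θ₂) t := by
      exact (((hasDerivAt_id' t).const_mul θ₂).neg).congr_deriv (by ring)
    have hA := ((hg _ (hmem1 t ht)).comp t hinner1).const_mul θ₂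
    have hB := ((hg _ (hmem2 t ht)).comp t hinner2).const_mul θ₁
    exact (hA.add hB).congr_deriv (by ring)
  have hwc : ContinuousOn w (Icc 0 1) :=
    fun t ht => (hw t ht).continuousAt.continuousWithinAt
  have hsq : ∀ t ∈ Ioo (0:ℝ) 1, HasDerivAt (fun s : ℝ => s * s) (2 * t) t := by
    intro t _
    exact ((hasDerivAt_id' t).mul (hasDerivAt_id' t)).congr_deriv (by ring)
  have hsqc : ContinuousOn (fun s : ℝ => s * s) (Icc 0 1) :=
    (continuous_id.mul continuous_id).continuousOn
  obtain ⟨c, hc, hcv⟩ := exists_ratio_hasDerivAt_eq_ratio_slope w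
    (fun t => θ₁ * θ₂ * (g1 (θ₁ * t) - g1 (-(θ₂ * t)))) zero_lt_one hwc
    (fun t ht => hw t (Ioo_subset_Icc_self ht)) (fun s => s * s) (fun t => 2 * t)
    hsqc hsq
  -- MVT for g1 on [-(θ₂ c), θ₁ c]
  have hc0 : 0 < c := hc.1
  have hc1 : c < 1 := hc.2
  have hab2 : -(θ₂ * c) < θ₁ * c := by nlinarith
  have hsub : Icc (-(θ₂ * c)) (θ₁ * c) ⊆ Icc (-θ₂) θ₁ := by
    intro t ht
    exact ⟨by nlinarith [ht.1], by nlinarith [ht.2]⟩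
  obtain ⟨ξ, hξ, hξv⟩ := exists_hasDerivAt_eq_slope g1 g2 hab2
    (fun t ht => (hg1 t (hsub ht)).continuousAt.continuousWithinAt)
    (fun t ht => hg1 t (hsub (Ioo_subset_Icc_self ht)))
  have e1 : g1 (θ₁ * c) - g1 (-(θ₂ * c)) = g2 ξ * ((θ₁ * c) - (-(θ₂ * c))) := by
    rw [eq_comm, div_eq_iff (by linarith : (θ₁ * c) - (-(θ₂ * c)) ≠ 0)] at hξv
    linarith [hξv]
  -- conclude: secondDiff = g2 ξ
  have hkey : (θ₁ * θ₂ * (θ₁ + θ₂) * g2 ξ) * c = (2 * (w 1 - w 0)) * c := by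
    linear_combination hcv - θ₁ * θ₂ * e1
  have hkey2 : θ₁ * θ₂ * (θ₁ + θ₂) * g2 ξ = 2 * (w 1 - w 0) :=
    mul_right_cancel₀ (ne_of_gt hc0) hkey
  have hw1 : w 1 = θ₂ * u (x + θ₁ • y) + θ₁ * u (x - θ₂ • y) := by
    simp only [hwdef, hgdef, mul_one]
    rw [show x + (-θ₂) • y = x - θ₂ • y by module]
  have hw0 : w 0 = (θ₁ + θ₂) * u x := by
    simp only [hwdef, hgdef, mul_zero, neg_zero, zero_smul, add_zero]
    ring
  rw [hw1, hw0] at hkey2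
  have hsd : secondDiff u x y θ₁ θ₂ = g2 ξ := by
    rw [secondDiff, div_eq_iff (by positivity : θ₁ * θ₂ * (θ₁ + θ₂) ≠ 0)]
    linear_combination -hkey2
  -- identify iteratedFDeriv with g2
  have hit : ∀ p : EuclideanSpace ℝ (Fin d),
      iteratedFDeriv ℝ 2 u p ![y, y] = fderiv ℝ (fderiv ℝ u) p y y := by
    intro p
    rw [iteratedFDeriv_two_apply]
    simp
  have hξIcc : ξ ∈ Icc (-θ₂) θ₁ := hsub (Ioo_subset_Icc_self hξ)
  have hξabs : |ξ| ≤ 1 := by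
    rw [abs_le]
    exact ⟨by linarith [hξIcc.1], by linarith [hξIcc.2]⟩
  have hpseg : x + ξ • y ∈ segment ℝ (x - θ₂ • y) (x + θ₁ • y) := hmem ξ hξIcc
  have hxseg : x ∈ segment ℝ (x - θ₂ • y) (x + θ₁ • y) := by
    have := hmem 0 ⟨by linarith, by linarith⟩
    simpa using this
  have hbound := hHolder (x + ξ • y) hpseg x hxseg
  rw [hit, hit] at hbound
  have hnorm : ‖(x + ξ • y) - x‖ = |ξ| * ‖y‖ := by
    rw [show (x + ξ • y) - x = ξ • y by abel, norm_smul, Real.norm_eq_abs]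
  have hnle : ‖(x + ξ • y) - x‖ ≤ ‖y‖ := by
    rw [hnorm]
    nlinarith [abs_nonneg ξ, norm_nonneg y]
  have hrle : ‖(x + ξ • y) - x‖ ^ α ≤ ‖y‖ ^ α :=
    Real.rpow_le_rpow (norm_nonneg _) hnle hα0.le
  have hfinal : H * ‖(x + ξ • y) - x‖ ^ α * ‖y‖ ^ 2 ≤ H * ‖y‖ ^ ((2:ℝ) + α) := by
    have heq : H * ‖y‖ ^ ((2:ℝ) + α) = H * ‖y‖ ^ α * ‖y‖ ^ 2 := by
      rw [Real.rpow_add' (norm_nonneg y) (by positivity),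
        show ((2:ℝ)) = ((2:ℕ) : ℝ) by norm_num, Real.rpow_natCast]
      ring
    rw [heq]
    gcongr
  rw [hsd, hit x, hg2def]
  exact le_trans hbound hfinal

end
end

section
/- Assume there exist x̂ ∈ F and ε₀ > 0 such that x̂ + t n ∈ K⁻ and x̂ − t n ∈ K⁺ for all t ∈ (0, ε₀). Then the jump J := ⟨∇L⁻ − ∇L⁺, n⟩ satisfies J ≥ 0. If, in addition, F affinely spans the hyperplane H, then ∇L⁻ − ∇L⁺ = J n; that is, the difference of the two gradients is normal to H and has length J. -/
open Set Metric MeasureTheory Filter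
open scoped RealInnerProductSpace

/-- **Sign and direction of the gradient jump of a piecewise affine convex function.**
If a convex function `γ` agrees with affine functions `L⁺ = ⟨p⁺,·⟩ + c⁺` on `K⁺` and
`L⁻ = ⟨p⁻,·⟩ + c⁻` on `K⁻`, `K⁺` and `K⁻` lying on opposite sides of the hyperplane `H`
through `x₀` with unit normal `n`, and the segment through `x̂ ∈ F = K⁺ ∩ K⁻` along `n`
stays in `K⁻` on the positive side and `K⁺` on the negative side, then the jump
`J = ⟨p⁻ − p⁺, n⟩` satisfies `J ≥ 0`; if moreover `F` affinely spans `H`, then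
`p⁻ − p⁺ = J n`. -/
theorem stmt_13 (d : ℕ) (hd : 1 ≤ d)
    (U : Set (EuclideanSpace ℝ (Fin d))) (hUo : IsOpen U) (hUc : Convex ℝ U)
    (n : EuclideanSpace ℝ (Fin d)) (hn : ‖n‖ = 1)
    (x₀ : EuclideanSpace ℝ (Fin d))
    (Kp Km : Set (EuclideanSpace ℝ (Fin d))) (hKpU : Kp ⊆ U) (hKmU : Km ⊆ U)
    (hKp : Kp ⊆ {x : EuclideanSpace ℝ (Fin d) | ⟪x - x₀, n⟫ ≤ 0})
    (hKm : Km ⊆ {x : EuclideanSpace ℝ (Fin d) | 0 ≤ ⟪x - x₀, n⟫})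
    (γ : EuclideanSpace ℝ (Fin d) → ℝ) (hγ : ConvexOn ℝ U γ)
    (pp pm : EuclideanSpace ℝ (Fin d)) (cp cm : ℝ)
    (hγp : ∀ x ∈ Kp, γ x = ⟪pp, x⟫ + cp)
    (hγm : ∀ x ∈ Km, γ x = ⟪pm, x⟫ + cm)
    (xhat : EuclideanSpace ℝ (Fin d)) (hxhat : xhat ∈ Kp ∩ Km)
    (ε₀ : ℝ) (hε₀ : 0 < ε₀)
    (hline : ∀ t ∈ Set.Ioo (0 : ℝ) ε₀, xhat + t • n ∈ Km ∧ xhat - t • n ∈ Kp) :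
    0 ≤ ⟪pm - pp, n⟫ ∧
      ((affineSpan ℝ (Kp ∩ Km) : Set (EuclideanSpace ℝ (Fin d)))
          = {x : EuclideanSpace ℝ (Fin d) | ⟪x - x₀, n⟫ = 0} →
        pm - pp = ⟪pm - pp, n⟫ • n) := by
  obtain ⟨hxp, hxm⟩ := hxhat
  set t : ℝ := ε₀ / 2 with ht
  have htmem : t ∈ Set.Ioo (0 : ℝ) ε₀ := ⟨by positivity, by simp [ht]; linarith⟩
  obtain ⟨hbm, hap⟩ := hline t htmem
  have ht0 : 0 < t := htmem.1
  -- Part 1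
  have h1 : 0 ≤ ⟪pm - pp, n⟫ := by
    have hmid : (1/2 : ℝ) • (xhat - t • n) + (1/2 : ℝ) • (xhat + t • n) = xhat := by
      module
    have hconv := hγ.2 (hKpU hap) (hKmU hbm) (by norm_num : (0:ℝ) ≤ 1/2)
      (by norm_num : (0:ℝ) ≤ 1/2) (by norm_num : (1/2 : ℝ) + 1/2 = 1)
    rw [hmid] at hconv
    have e1 : γ xhat = ⟪pp, xhat⟫ + cp := hγp _ hxp
    have e2 : γ xhat = ⟪pm, xhat⟫ + cm := hγm _ hxm
    have e3 : γ (xhat - t • n) = ⟪pp, xhat⟫ - t * ⟪pp, n⟫ + cp := by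
      rw [hγp _ hap, inner_sub_right, real_inner_smul_right]
    have e4 : γ (xhat + t • n) = ⟪pm, xhat⟫ + t * ⟪pm, n⟫ + cm := by
      rw [hγm _ hbm, inner_add_right, real_inner_smul_right]
    rw [e3, e4] at hconv
    simp only [smul_eq_mul] at hconv
    have key : 0 ≤ t * (⟪pm, n⟫ - ⟪pp, n⟫) := by nlinarith [hconv, e1, e2]
    have : 0 ≤ ⟪pm, n⟫ - ⟪pp, n⟫ := nonneg_of_mul_nonneg_right key ht0
    rw [inner_sub_left]; linarith
  refine ⟨h1, fun hspan => ?_⟩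
  -- Part 2
  set v := pm - pp with hv
  have horth : vectorSpan ℝ (Kp ∩ Km) ≤ (ℝ ∙ v)ᗮ := by
    rw [vectorSpan_def, Submodule.span_le]
    rintro u ⟨a, ha, b, hb, rfl⟩
    rw [SetLike.mem_coe, Submodule.mem_orthogonal_singleton_iff_inner_right]
    have e1 : ⟪pp, a⟫ + cp = ⟪pm, a⟫ + cm := by
      rw [← hγp _ ha.1, hγm _ ha.2]
    have e2 : ⟪pp, b⟫ + cp = ⟪pm, b⟫ + cm := by
      rw [← hγp _ hb.1, hγm _ hb.2]
    show ⟪v, a - b⟫ = 0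
    rw [hv, inner_sub_left, inner_sub_right, inner_sub_right]
    linarith
  have hxH : ⟪xhat - x₀, n⟫ = 0 := le_antisymm (hKp hxp) (hKm hxm)
  have hnw : ⟪n, v - ⟪v, n⟫ • n⟫ = 0 := by
    rw [inner_sub_right, real_inner_smul_right, real_inner_self_eq_norm_sq, hn,
      real_inner_comm]
    ring
  have hmem1 : v - ⟪v, n⟫ • n + xhat ∈ affineSpan ℝ (Kp ∩ Km) := by
    have hmem : v - ⟪v, n⟫ • n + xhat
        ∈ (affineSpan ℝ (Kp ∩ Km) : Set (EuclideanSpace ℝ (Fin d))) := by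
      rw [hspan]
      show ⟪v - ⟪v, n⟫ • n + xhat - x₀, n⟫ = 0
      have hsplit : v - ⟪v, n⟫ • n + xhat - x₀ = (v - ⟪v, n⟫ • n) + (xhat - x₀) := by
        abel
      rw [hsplit, inner_add_left, hxH, real_inner_comm, hnw]
      ring
    exact hmem
  have hmem2 : xhat ∈ affineSpan ℝ (Kp ∩ Km) := mem_affineSpan ℝ ⟨hxp, hxm⟩
  have hwdir : v - ⟪v, n⟫ • n ∈ vectorSpan ℝ (Kp ∩ Km) := by
    have hdd := AffineSubspace.vsub_mem_direction hmem1 hmem2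
    rw [direction_affineSpan] at hdd
    have hsub : (v - ⟪v, n⟫ • n + xhat) -ᵥ xhat = v - ⟪v, n⟫ • n := by
      show (v - ⟪v, n⟫ • n + xhat) - xhat = v - ⟪v, n⟫ • n
      abel
    rwa [hsub] at hdd
  have hvw : ⟪v, v - ⟪v, n⟫ • n⟫ = 0 := by
    have hdd := horth hwdir
    rwa [Submodule.mem_orthogonal_singleton_iff_inner_right] at hdd
  have hnorm : ⟪v - ⟪v, n⟫ • n, v - ⟪v, n⟫ • n⟫ = 0 := by
    rw [inner_sub_left, real_inner_smul_left, hvw, hnw]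
    ring
  have hw0 : v - ⟪v, n⟫ • n = 0 := inner_self_eq_zero.mp hnorm
  exact sub_eq_zero.mp hw0
end
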